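/- Fix G ≥ 2, ρ ∈ [0,1], ε ≥ 0, δ ∈ (0,1). Let q*_1,...,q*_G ∈ [0,1], let Y_1,...,Y_G be independent with Y_i ~ Bernoulli(q*_i), and let q_1,...,q_G satisfy |q_i − q*_i| ≤ ε. Define μ_{-j} = (1/(G-1))∑_{i≠j} q_i, μ*_{-j} = (1/(G-1))∑_{i≠j} q*_i, let ĵ be a (deterministic, since the q_i are deterministic) minimizer of |μ_{-j} − ρ|, and let p̂ = (1/(G-1))∑_{i≠ĵ} Y_i. Then with probability at least 1 − δ, |p̂ − ρ| ≤ min_j |μ*_{-j} − ρ| + 2ε + sqrt(log(2/δ)/(2(G−1))). -/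

import Mathlib

/-!
Since the estimates `q i` are deterministic, so is the pruned index `ĵ`, and Hoeffding's
inequality applies directly to the `G - 1` outcomes kept after pruning, with no union bound over
`j`: with probability at least `1 - δ` their mean is within `√(log (2/δ) / (2 (G - 1)))` of
`μ*_{-ĵ}`. The remaining error is deterministic: every `μ_{-j}` is within `ε` of `μ*_{-j}`, so
the plug-in minimiser `ĵ` of `|μ_{-j} - ρ|` is at most `2ε` worse than the best `j` for `μ*`.
-/

open MeasureTheory ProbabilityTheory Real Finset

section Hoeffding

variable {ι Ω : Type*} [MeasurableSpace Ω] {μ : Measure Ω}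

lemma ofReal_one_sub_le_measure_compl [IsProbabilityMeasure μ] {s : Set Ω}
    (hs : NullMeasurableSet s μ) {δ : ℝ} (h : μ.real s ≤ δ) : ENNReal.ofReal (1 - δ) ≤ μ sᶜ := by
  rw [← ofReal_measureReal, probReal_compl_eq_one_sub₀ hs]
  gcongr

lemma measureReal_abs_sum_ge_le_of_iIndepFun {X : ι → Ω → ℝ} (hind : iIndepFun X μ)
    {c : ι → NNReal} {s : Finset ι} (hX : ∀ i ∈ s, HasSubgaussianMGF (X i) (c i) μ)
    {t : ℝ} (ht : 0 ≤ t) :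
    μ.real {ω | t ≤ |∑ i ∈ s, X i ω|} ≤ 2 * exp (-t ^ 2 / (2 * ∑ i ∈ s, c i)) := by
  have := hind.isProbabilityMeasure
  have hind_neg : iIndepFun (fun i => -X i) μ :=
    hind.comp (fun _ => Neg.neg) fun _ => measurable_neg
  have upper := HasSubgaussianMGF.measure_sum_ge_le_of_iIndepFun hind hX ht
  have lower := HasSubgaussianMGF.measure_sum_ge_le_of_iIndepFun hind_neg
    (fun i hi => (hX i hi).neg) ht
  have hsplit : {ω | t ≤ |∑ i ∈ s, X i ω|}
      ⊆ {ω | t ≤ ∑ i ∈ s, X i ω} ∪ {ω | t ≤ ∑ i ∈ s, (-X i) ω} := by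
    intro ω hω
    simp only [Set.mem_ofPred_eq, Set.mem_union, Pi.neg_apply, sum_neg_distrib] at hω ⊢
    rcases le_abs'.mp hω with h | h
    · exact Or.inr (by linarith)
    · exact Or.inl h
  calc μ.real {ω | t ≤ |∑ i ∈ s, X i ω|}
      ≤ μ.real {ω | t ≤ ∑ i ∈ s, X i ω} + μ.real {ω | t ≤ ∑ i ∈ s, (-X i) ω} :=
        (measureReal_mono hsplit).trans (measureReal_union_le _ _)
    _ ≤ 2 * exp (-t ^ 2 / (2 * ∑ i ∈ s, c i)) := by linarith

lemma measureReal_abs_sum_sub_integral_ge_le_of_mem_Icc {Y : ι → Ω → ℝ}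
    (hind : iIndepFun Y μ) (hmeas : ∀ i, AEMeasurable (Y i) μ) {a b : ℝ}
    (hab : ∀ i, ∀ᵐ ω ∂μ, Y i ω ∈ Set.Icc a b) (s : Finset ι) {t : ℝ} (ht : 0 ≤ t) :
    μ.real {ω | t ≤ |∑ i ∈ s, (Y i ω - μ[Y i])|}
      ≤ 2 * exp (-2 * t ^ 2 / (#s * (b - a) ^ 2)) := by
  have := hind.isProbabilityMeasure
  have hind_centered : iIndepFun (fun i ω => Y i ω - μ[Y i]) μ :=
    (hind.comp (fun i y => y - μ[Y i]) fun _ => measurable_id.sub_const _ :)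
  convert measureReal_abs_sum_ge_le_of_iIndepFun hind_centered
    (fun i _ => hasSubgaussianMGF_of_mem_Icc (hmeas i) (hab i)) ht using 3
  push_cast
  rw [sum_const, nsmul_eq_mul, Real.norm_eq_abs, div_pow, sq_abs, ← div_pow,
    show 2 * (#s * ((b - a) / 2) ^ 2) = #s * (b - a) ^ 2 / 2 by ring, div_div_eq_mul_div]
  ring

lemma ofReal_one_sub_le_measure_abs_sum_sub_integral_le {Y : ι → Ω → ℝ}
    (hind : iIndepFun Y μ) (hmeas : ∀ i, AEMeasurable (Y i) μ)
    (hY : ∀ i, ∀ᵐ ω ∂μ, Y i ω ∈ Set.Icc 0 1) {s : Finset ι} (hs : s.Nonempty) {δ : ℝ}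
    (hδ₀ : 0 < δ) (hδ₂ : δ ≤ 2) :
    ENNReal.ofReal (1 - δ) ≤
      μ {ω | |∑ i ∈ s, (Y i ω - μ[Y i])| ≤ #s * √(log (2 / δ) / (2 * #s))} := by
  have := hind.isProbabilityMeasure
  set m : ℝ := (#s : ℝ)
  set a := √(log (2 / δ) / (2 * m))
  have hm : 0 < m := by simpa [m] using hs.card_pos
  have htail : 2 * exp (-2 * (m * a) ^ 2 / m) = δ := by
    have hlog : 0 ≤ log (2 / δ) := log_nonneg (by rwa [le_div_iff₀ hδ₀, one_mul])
    rw [mul_pow, sq_sqrt (by positivity),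
      show -2 * (m ^ 2 * (log (2 / δ) / (2 * m))) / m = -log (2 / δ) by field_simp,
      exp_neg, exp_log (by positivity)]
    field_simp
  have hdev := measureReal_abs_sum_sub_integral_ge_le_of_mem_Icc hind hmeas hY s
    (by positivity : 0 ≤ m * a)
  rw [sub_zero, one_pow, mul_one, htail] at hdev
  refine (ofReal_one_sub_le_measure_compl (nullMeasurableSet_le (by fun_prop) (by fun_prop))
    hdev).trans (measure_mono fun ω hω => ?_)
  simp only [Set.mem_compl_iff, Set.mem_ofPred_eq, not_le] at hω
  exact hω.le

end Hoeffding

lemma abs_div_sub_le_of_abs_sub_le {x y n r ρ : ℝ} (hn : 0 < n) (h : |x - y| ≤ n * r) :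
    |x / n - ρ| ≤ |y / n - ρ| + r := by
  have hxy : |x / n - y / n| ≤ r := by
    rwa [← sub_div, abs_div, abs_of_pos hn, div_le_iff₀ hn, mul_comm]
  linarith [abs_sub_le (x / n) (y / n) ρ]

lemma abs_sum_sub_sum_le_card_mul {ι : Type*} (s : Finset ι) {f g : ι → ℝ} {ε : ℝ}
    (h : ∀ i ∈ s, |f i - g i| ≤ ε) : |∑ i ∈ s, f i - ∑ i ∈ s, g i| ≤ #s * ε := by
  rw [← sum_sub_distrib, ← nsmul_eq_mul]
  exact (abs_sum_le_sum_abs _ _).trans (sum_le_card_nsmul _ _ _ h)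

lemma abs_sub_le_iInf_add_of_forall_abs_sub_le {ι : Type*} [Nonempty ι] {f g : ι → ℝ}
    {ρ ε : ℝ} (hfg : ∀ j, |f j - g j| ≤ ε) {k : ι} (hk : ∀ j, |f k - ρ| ≤ |f j - ρ|) :
    |g k - ρ| ≤ (⨅ j, |g j - ρ|) + 2 * ε := by
  rw [← sub_le_iff_le_add]
  refine le_ciInf fun j => ?_
  linarith [abs_sub_le (g k) (f k) ρ, abs_sub_le (f j) (g j) ρ, abs_sub_comm (g k) (f k),
    hk j, hfg k, hfg j]

theorem high_probability_closeness_to_target_general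
    (G : ℕ) (hG : 2 ≤ G) (ρ : ℝ)
    (ε : ℝ) (δ : ℝ) (hδ : δ ∈ Set.Ioo (0:ℝ) 1)
    {Ω : Type*} [MeasurableSpace Ω] (μ : Measure Ω) [IsProbabilityMeasure μ]
    (qstar : Fin G → ℝ)
    (Y : Fin G → Ω → ℝ) (hmeas : ∀ i, Measurable (Y i))
    (hind : iIndepFun Y μ)
    (h01 : ∀ i ω, Y i ω = 0 ∨ Y i ω = 1)
    (hmean : ∀ i, μ[Y i] = qstar i)
    (q : Fin G → ℝ) (hqe : ∀ i, |q i - qstar i| ≤ ε)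
    (μm μsm : Fin G → ℝ)
    (hμm : ∀ j, μm j = (∑ i ∈ Finset.univ.erase j, q i) / ((G : ℝ) - 1))
    (hμsm : ∀ j, μsm j = (∑ i ∈ Finset.univ.erase j, qstar i) / ((G : ℝ) - 1))
    (jhat : Fin G) (hjhat : ∀ j, |μm jhat - ρ| ≤ |μm j - ρ|) :
    ENNReal.ofReal (1 - δ) ≤
      μ {ω | |(∑ i ∈ Finset.univ.erase jhat, Y i ω) / ((G : ℝ) - 1) - ρ|
        ≤ (⨅ j, |μsm j - ρ|) + 2 * ε
          + Real.sqrt (Real.log (2 / δ) / (2 * ((G : ℝ) - 1)))} := by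
  obtain ⟨hδ0, hδ1⟩ := hδ
  have : Nontrivial (Fin G) := Fin.nontrivial_iff_two_le.mpr hG
  set n : ℝ := (G : ℝ) - 1
  have hn : 0 < n := by
    have : (2 : ℝ) ≤ G := by exact_mod_cast hG
    linarith
  have hcard (j : Fin G) : (#(univ.erase j) : ℝ) = n := by
    rw [card_erase_of_mem (mem_univ j), card_univ, Fintype.card_fin, Nat.cast_pred (by omega)]
  have hdet : |μsm jhat - ρ| ≤ (⨅ j, |μsm j - ρ|) + 2 * ε := by
    refine abs_sub_le_iInf_add_of_forall_abs_sub_le (fun j => ?_) hjhat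
    rw [hμm, hμsm, ← sub_div, abs_div, abs_of_pos hn, div_le_iff₀ hn, ← hcard j, mul_comm]
    exact abs_sum_sub_sum_le_card_mul _ fun i _ => hqe i
  have hconc := ofReal_one_sub_le_measure_abs_sum_sub_integral_le hind
    (fun i => (hmeas i).aemeasurable)
    (fun i => ae_of_all _ fun ω => by rcases h01 i ω with h | h <;> simp [h])
    (univ_nontrivial.erase_nonempty (a := jhat)) hδ0 (by linarith)
  simp only [hmean, hcard, sum_sub_distrib] at hconc
  refine hconc.trans (measure_mono fun ω hω => ?_)
  have hclose := abs_div_sub_le_of_abs_sub_le (ρ := ρ) hn hω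
  rw [← hμsm] at hclose
  exact hclose.trans (by linarith)

theorem high_probability_closeness_to_target
    (G : ℕ) (hG : 2 ≤ G) (ρ : ℝ) (hρ : ρ ∈ Set.Icc (0:ℝ) 1)
    (ε : ℝ) (hε : 0 ≤ ε) (δ : ℝ) (hδ : δ ∈ Set.Ioo (0:ℝ) 1)
    {Ω : Type*} [MeasurableSpace Ω] (μ : Measure Ω) [IsProbabilityMeasure μ]
    (qstar : Fin G → ℝ) (hqstar : ∀ i, qstar i ∈ Set.Icc (0:ℝ) 1)
    (Y : Fin G → Ω → ℝ) (hmeas : ∀ i, Measurable (Y i))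
    (hind : iIndepFun Y μ)
    (h01 : ∀ i ω, Y i ω = 0 ∨ Y i ω = 1)
    (hmean : ∀ i, μ[Y i] = qstar i)
    (q : Fin G → ℝ) (hqe : ∀ i, |q i - qstar i| ≤ ε)
    (μm μsm : Fin G → ℝ)
    (hμm : ∀ j, μm j = (∑ i ∈ Finset.univ.erase j, q i) / ((G : ℝ) - 1))
    (hμsm : ∀ j, μsm j = (∑ i ∈ Finset.univ.erase j, qstar i) / ((G : ℝ) - 1))
    (jhat : Fin G) (hjhat : ∀ j, |μm jhat - ρ| ≤ |μm j - ρ|) :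
    ENNReal.ofReal (1 - δ) ≤
      μ {ω | |(∑ i ∈ Finset.univ.erase jhat, Y i ω) / ((G : ℝ) - 1) - ρ|
        ≤ (⨅ j, |μsm j - ρ|) + 2 * ε
          + Real.sqrt (Real.log (2 / δ) / (2 * ((G : ℝ) - 1)))} :=
  high_probability_closeness_to_target_general G hG ρ ε δ hδ μ qstar Y hmeas hind h01 hmean q hqe μm
    μsm hμm hμsm jhat hjhat
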